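/- Let M be a finitely generated ℕ^r-graded module over S = K[x_1,…,x_r] and let P ∈ ℤ[t_1,…,t_r] be a polynomial such that ∏_{i=1}^r (1−t_i) · HS(M,t) = P(t_1,…,t_r) as formal power series. Then rk_S(M) = P(1,1,…,1). -/

import Mathlib

/-!
Since `∏ i, (1 - X i)` is inverted by the series of all monomials, `HS = P · ∑_u X^u`, so the
coefficient of `HS` at `N` is `P(1, …, 1)` as soon as `N` dominates every exponent of `P`.

On the module side, choose homogeneous `m_1, …, m_n` whose images form a basis of `Frac(S) ⊗ M`, so
`n = rk M`. They are `S`-linearly independent and every element of `M` has a nonzero multiple in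
`F = ∑ S m_i`. As `F` is spanned by homogeneous elements, it is stable under taking homogeneous
components, so for a homogeneous generator `g` of `M` the nonzero multiple can be taken to be a
monomial `x^v`. Hence `M_N ⊆ F` for `N` large, and then `M_N` has the `K`-basis
`x^(N - deg m_i) m_i`, so `dim_K M_N = n`.
-/

/-- The rank of a module `M` over an integral domain `R`:
`rk_R(M) = dim_Q (M ⊗_R Q)` where `Q` is the fraction field of `R`. -/
noncomputable def rk (R : Type) [CommRing R] (M : Type) [AddCommGroup M] [Module R M] : ℕ :=
  Module.finrank (FractionRing R) (TensorProduct R (FractionRing R) M)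

namespace MvPowerSeries

variable {σ R : Type*} [CommRing R]

def sumMonomialsOutside (s : Finset σ) : MvPowerSeries σ R :=
  fun u => if ∀ i ∈ s, u i = 0 then 1 else 0

@[simp]
lemma coeff_sumMonomialsOutside (s : Finset σ) (u : σ →₀ ℕ) :
    coeff u (sumMonomialsOutside s : MvPowerSeries σ R) = if ∀ i ∈ s, u i = 0 then 1 else 0 :=
  rfl

lemma one_sub_X_mul_sumMonomialsOutside [DecidableEq σ] {i : σ} {s : Finset σ} (hi : i ∉ s) :
    (1 - X i) * sumMonomialsOutside s =
      (sumMonomialsOutside (insert i s) : MvPowerSeries σ R) := by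
  ext u
  have hsingle : ∀ j ∈ s, Finsupp.single i 1 j = 0 := fun j hj =>
    Finsupp.single_eq_of_ne (fun h => hi (h ▸ hj))
  rw [sub_mul, one_mul, map_sub, X, coeff_monomial_mul]
  by_cases h0 : u i = 0
  · simp [Finsupp.single_le_iff, h0]
  · simp +contextual [Finsupp.single_le_iff, Nat.one_le_iff_ne_zero, h0, hsingle]

lemma prod_one_sub_X_mul_sumMonomialsOutside_empty (s : Finset σ) :
    (∏ i ∈ s, (1 - X i)) * sumMonomialsOutside ∅ =
      (sumMonomialsOutside s : MvPowerSeries σ R) := by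
  classical
  induction s using Finset.induction with
  | empty => rw [Finset.prod_empty, one_mul]
  | insert i s hi ih =>
    rw [Finset.prod_insert hi, mul_assoc, ih, one_sub_X_mul_sumMonomialsOutside hi]

lemma sumMonomialsOutside_univ [Fintype σ] :
    (sumMonomialsOutside Finset.univ : MvPowerSeries σ R) = 1 := by
  ext u
  classical
  rw [coeff_sumMonomialsOutside, coeff_one]
  simp [Finsupp.ext_iff]

lemma coeff_mul_sumMonomialsOutside_empty (P : MvPolynomial σ R) {N : σ →₀ ℕ}
    (hN : ∀ u ∈ P.support, u ≤ N) :
    coeff N ((P : MvPowerSeries σ R) * sumMonomialsOutside ∅) =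
      MvPolynomial.eval (fun _ => 1) P := by
  have hP : (P : MvPowerSeries σ R) = ∑ u ∈ P.support, monomial u (P.coeff u) := by
    conv_lhs => rw [← P.support_sum_monomial_coeff]
    rw [← MvPolynomial.coeToMvPowerSeries.ringHom_apply, map_sum]
    simp [MvPolynomial.coeToMvPowerSeries.ringHom_apply, MvPolynomial.coe_monomial]
  simp only [hP, Finset.sum_mul, map_sum, coeff_monomial_mul]
  rw [MvPolynomial.eval_eq]
  refine Finset.sum_congr rfl fun u hu => ?_
  simp [hN u hu]

theorem coeff_eq_eval_one_of_prod_one_sub_X_mul_eq [Fintype σ] {f : MvPowerSeries σ R}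
    {P : MvPolynomial σ R} (h : (∏ i, (1 - X i)) * f = P) {N : σ →₀ ℕ}
    (hN : ∀ u ∈ P.support, u ≤ N) : coeff N f = MvPolynomial.eval (fun _ => 1) P := by
  have hf : f = (P : MvPowerSeries σ R) * sumMonomialsOutside ∅ := by
    rw [← h, mul_right_comm, prod_one_sub_X_mul_sumMonomialsOutside_empty,
      sumMonomialsOutside_univ, one_mul]
  rw [hf, coeff_mul_sumMonomialsOutside_empty P hN]

end MvPowerSeries

open Submodule

theorem IsLocalizedModule.exists_smul_mem_span_of_mem_span {R M N Rₚ : Type*} [CommRing R]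
    [CommRing Rₚ] [Algebra R Rₚ] [AddCommGroup M] [Module R M] [AddCommGroup N] [Module R N]
    [Module Rₚ N] [IsScalarTower R Rₚ N] (p : Submonoid R) [IsLocalization p Rₚ]
    (f : M →ₗ[R] N) [IsLocalizedModule p f] {s : Set M} {z : M} (hz : f z ∈ span Rₚ (f '' s)) :
    ∃ a ∈ p, a • z ∈ span R s := by
  rw [← localized'_span Rₚ p f] at hz
  obtain ⟨m, hm, c, hc⟩ := hz
  rw [IsLocalizedModule.mk'_eq_iff, Submonoid.smul_def, ← map_smul] at hc
  obtain ⟨t, ht⟩ := IsLocalizedModule.exists_of_eq (S := p) hc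
  refine ⟨t * c, mul_mem t.2 c.2, ?_⟩
  have htc : ((t : R) * c) • z = t • m := by rw [ht, Submonoid.smul_def, mul_smul]
  exact htc ▸ smul_mem _ _ hm

theorem exists_linearIndependent_fin_rk_of_span_eq_top {R M : Type} [CommRing R] [IsDomain R]
    [AddCommGroup M] [Module R M] [Module.Finite R M] {H : Set M} (hH : span R H = ⊤) :
    ∃ m : Fin (rk R M) → M, (∀ i, m i ∈ H) ∧ LinearIndependent R m ∧
      ∀ z, ∃ a : R, a ≠ 0 ∧ a • z ∈ span R (Set.range m) := by
  set Q := FractionRing R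
  set φ : M →ₗ[R] TensorProduct R Q M := TensorProduct.mk R Q M 1
  have : IsLocalizedModule (nonZeroDivisors R) φ :=
    (isLocalizedModule_iff_isBaseChange _ Q φ).mpr (TensorProduct.isBaseChange R M Q)
  have hspan := span_eq_top_of_isLocalizedModule Q (nonZeroDivisors R) φ hH
  let B₀ := Module.Basis.ofSpan hspan.ge
  let B : Module.Basis (Fin (rk R M)) Q (TensorProduct R Q M) :=
    B₀.reindex (B₀.indexEquiv (Module.finBasis Q (TensorProduct R Q M)))
  have hB : ∀ i, ∃ z ∈ H, φ z = B i := fun i =>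
    Module.Basis.ofSpan_subset hspan.ge ⟨_, (B₀.reindex_apply _ i).symm⟩
  choose m hmH hφm using hB
  have hφm' : φ ∘ m = B := funext hφm
  refine ⟨m, hmH, ?_, fun z => ?_⟩
  · refine LinearIndependent.of_comp φ ?_
    rw [hφm']
    exact B.linearIndependent.restrict_scalars' R
  · have hz : φ z ∈ span Q (φ '' Set.range m) := by
      rw [← Set.range_comp, hφm', B.span_eq]; exact mem_top
    obtain ⟨a, ha, haz⟩ :=
      IsLocalizedModule.exists_smul_mem_span_of_mem_span (nonZeroDivisors R) φ hz
    exact ⟨a, nonZeroDivisors.ne_zero ha, haz⟩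

open MvPolynomial DirectSum

section LinearIndependent

variable {σ K M : Type*} [Field K] [AddCommGroup M] [Module (MvPolynomial σ K) M] [Module K M]
  [IsScalarTower K (MvPolynomial σ K) M]

theorem monomial_smul_eq_smul_monomial_one_smul (v : σ →₀ ℕ) (c : K) (m : M) :
    monomial v c • m = c • monomial v (1 : K) • m := by
  rw [← smul_assoc, smul_monomial, smul_eq_mul, mul_one]

theorem LinearIndependent.monomial_one_smul {ι : Type*} {m : ι → M}
    (hm : LinearIndependent (MvPolynomial σ K) m) (e : ι → σ →₀ ℕ) :
    LinearIndependent K fun i => monomial (e i) (1 : K) • m i := by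
  rw [linearIndependent_iff'] at hm ⊢
  intro s c hc i hi
  simp_rw [← monomial_smul_eq_smul_monomial_one_smul] at hc
  exact monomial_eq_zero.mp (hm s _ hc i hi)

end LinearIndependent

def MonomialSMulGraded {σ K M : Type*} [CommSemiring K] [AddCommMonoid M]
    [Module (MvPolynomial σ K) M] [Module K M] (ℳ : (σ →₀ ℕ) → Submodule K M) : Prop :=
  ∀ (u v : σ →₀ ℕ) (c : K) (m : M), m ∈ ℳ v → monomial u c • m ∈ ℳ (u + v)

section GradedModule

variable {σ K M : Type*} [Field K] [AddCommGroup M] [Module (MvPolynomial σ K) M] [Module K M]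
  [DecidableEq σ] {ℳ : (σ →₀ ℕ) → Submodule K M} [Decomposition ℳ]

theorem coe_decompose_smul_of_mem (hℳ : MonomialSMulGraded ℳ)
    {g : M} {w : σ →₀ ℕ} (hg : g ∈ ℳ w)
    (h : MvPolynomial σ K) (u : σ →₀ ℕ) :
    (decompose ℳ (h • g) u : M) =
      if w ≤ u then monomial (u - w) (coeff (u - w) h) • g else 0 := by
  have hterm : ∀ v, (decompose ℳ (monomial v (coeff v h) • g) u : M) =
      if v + w = u then monomial v (coeff v h) • g else 0 := fun v => by
    split_ifs with hv
    · exact decompose_of_mem_same ℳ (hv ▸ hℳ v w _ g hg)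
    · exact decompose_of_mem_ne ℳ (hℳ v w _ g hg) hv
  conv_lhs => rw [← support_sum_monomial_coeff h, Finset.sum_smul, decompose_sum]
  rw [DFinsupp.finsetSum_apply, AddSubmonoidClass.coe_finsetSum]
  simp_rw [hterm]
  split_ifs with hwu
  · rw [Finset.sum_eq_single (u - w)]
    · rw [if_pos (tsub_add_cancel_of_le hwu)]
    · intro v _ hv
      rw [if_neg fun h => hv (eq_tsub_of_add_eq h)]
    · intro hv
      rw [notMem_support_iff.mp hv, monomial_zero, zero_smul, ite_self]
  · exact Finset.sum_eq_zero fun v _ => if_neg fun h : v + w = u => hwu (h ▸ le_add_self)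

theorem exists_finset_span_decompose_eq_top [Module.Finite (MvPolynomial σ K) M] :
    ∃ (T : Finset M) (D : Finset (σ →₀ ℕ)),
      span (MvPolynomial σ K) (Set.range fun p : T × D => (decompose ℳ (p.1 : M) p.2 : M)) =
        ⊤ := by
  classical
  obtain ⟨T, hT⟩ := Module.Finite.fg_top (R := MvPolynomial σ K) (M := M)
  refine ⟨T, T.biUnion fun t => (decompose ℳ t).support, eq_top_iff.mpr ?_⟩
  rw [← hT, span_le]
  intro t ht
  rw [← sum_support_decompose ℳ t]
  exact sum_mem fun u hu => subset_span
    ⟨(⟨t, ht⟩, ⟨u, Finset.mem_biUnion.mpr ⟨t, ht, hu⟩⟩), rfl⟩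

variable [IsScalarTower K (MvPolynomial σ K) M]

theorem coe_decompose_mem_span_monomial_smul_of_mem_span (hℳ : MonomialSMulGraded ℳ)
    {ι : Type*} [Fintype ι] {g : ι → M} {b : ι → σ →₀ ℕ} (hg : ∀ j, g j ∈ ℳ (b j)) {z : M}
    (hz : z ∈ span (MvPolynomial σ K) (Set.range g)) (u : σ →₀ ℕ) :
    (decompose ℳ z u : M) ∈
      span K (Set.range fun j : {j // b j ≤ u} => monomial (u - b j) (1 : K) • g j) := by
  obtain ⟨c, rfl⟩ := (mem_span_range_iff_exists_fun _).mp hz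
  rw [decompose_sum, DFinsupp.finsetSum_apply, AddSubmonoidClass.coe_finsetSum]
  refine sum_mem fun j _ => ?_
  rw [coe_decompose_smul_of_mem hℳ (hg j)]
  split_ifs with hj
  · rw [monomial_smul_eq_smul_monomial_one_smul]
    exact smul_mem _ _ (subset_span ⟨⟨j, hj⟩, rfl⟩)
  · exact zero_mem _

theorem coe_decompose_mem_span_of_mem_span (hℳ : MonomialSMulGraded ℳ)
    {ι : Type*} [Fintype ι] {g : ι → M} {b : ι → σ →₀ ℕ} (hg : ∀ j, g j ∈ ℳ (b j)) {z : M}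
    (hz : z ∈ span (MvPolynomial σ K) (Set.range g)) (u : σ →₀ ℕ) :
    (decompose ℳ z u : M) ∈ span (MvPolynomial σ K) (Set.range g) := by
  have h := coe_decompose_mem_span_monomial_smul_of_mem_span hℳ hg hz u
  refine (span_le (p := (span (MvPolynomial σ K) (Set.range g)).restrictScalars K)).mpr ?_ h
  rintro _ ⟨j, rfl⟩
  exact smul_mem _ _ (subset_span (Set.mem_range_self _))

theorem monomial_one_smul_mem_of_smul_mem (hℳ : MonomialSMulGraded ℳ)
    {F : Submodule (MvPolynomial σ K) M} (hF : ∀ z ∈ F, ∀ u, (decompose ℳ z u : M) ∈ F)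
    {g : M} {w : σ →₀ ℕ} (hg : g ∈ ℳ w) {s : MvPolynomial σ K} (hs : s • g ∈ F)
    {v : σ →₀ ℕ} (hv : coeff v s ≠ 0) : monomial v (1 : K) • g ∈ F := by
  have h := hF _ hs (v + w)
  rw [coe_decompose_smul_of_mem hℳ hg, if_pos le_add_self, add_tsub_cancel_right,
    monomial_smul_eq_smul_monomial_one_smul] at h
  simpa [smul_smul, inv_mul_cancel₀ hv] using (F.restrictScalars K).smul_mem (coeff v s)⁻¹ h

theorem mem_of_monomial_smul_mem (hℳ : MonomialSMulGraded ℳ)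
    {ι : Type*} [Fintype ι] {g : ι → M} {b : ι → σ →₀ ℕ} (hg : ∀ j, g j ∈ ℳ (b j))
    (hgen : span (MvPolynomial σ K) (Set.range g) = ⊤) {F : Submodule (MvPolynomial σ K) M}
    {v : ι → σ →₀ ℕ} (hv : ∀ j, monomial (v j) (1 : K) • g j ∈ F) {N : σ →₀ ℕ}
    (hN : ∀ j, v j + b j ≤ N) {z : M} (hz : z ∈ ℳ N) : z ∈ F := by
  have h := coe_decompose_mem_span_monomial_smul_of_mem_span hℳ hg (hgen ▸ mem_top : z ∈ _) N
  rw [decompose_of_mem_same ℳ hz] at h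
  refine (span_le (p := F.restrictScalars K)).mpr ?_ h
  rintro _ ⟨⟨j, -⟩, rfl⟩
  have hvj : v j ≤ N - b j := le_tsub_of_add_le_right (hN j)
  dsimp only
  rw [← tsub_add_cancel_of_le hvj, ← mul_one (1 : K), ← monomial_mul, mul_smul]
  exact F.smul_mem _ (hv j)

theorem finrank_eq_card_of_le_span (hℳ : MonomialSMulGraded ℳ)
    {ι : Type*} [Fintype ι] {m : ι → M} {a : ι → σ →₀ ℕ} (hm : ∀ i, m i ∈ ℳ (a i))
    (hind : LinearIndependent (MvPolynomial σ K) m) {N : σ →₀ ℕ} (haN : ∀ i, a i ≤ N)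
    (hN : ∀ z ∈ ℳ N, z ∈ span (MvPolynomial σ K) (Set.range m)) :
    Module.finrank K (ℳ N) = Fintype.card ι := by
  have hspan : ℳ N = span K (Set.range fun i => monomial (N - a i) (1 : K) • m i) := by
    refine le_antisymm (fun z hz => ?_) (span_le.mpr ?_)
    · have h := coe_decompose_mem_span_monomial_smul_of_mem_span hℳ hm (hN z hz) N
      rw [decompose_of_mem_same ℳ hz] at h
      refine span_mono ?_ h
      rintro _ ⟨⟨i, -⟩, rfl⟩
      exact ⟨i, rfl⟩
    · rintro _ ⟨i, rfl⟩
      simpa [tsub_add_cancel_of_le (haN i)] using hℳ (N - a i) (a i) 1 (m i) (hm i)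
  rw [hspan, finrank_span_eq_card (hind.monomial_one_smul _)]

end GradedModule

theorem exists_finrank_eq_rk {σ K M : Type} [Field K] [AddCommGroup M]
    [Module (MvPolynomial σ K) M] [Module K M] [IsScalarTower K (MvPolynomial σ K) M]
    [Module.Finite (MvPolynomial σ K) M] [DecidableEq σ] {ℳ : (σ →₀ ℕ) → Submodule K M}
    [Decomposition ℳ]
    (hℳ : MonomialSMulGraded ℳ) :
    ∃ N₀, ∀ N, N₀ ≤ N → Module.finrank K (ℳ N) = rk (MvPolynomial σ K) M := by
  obtain ⟨T, D, hgen⟩ := exists_finset_span_decompose_eq_top (ℳ := ℳ)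
  set g := fun p : T × D => (decompose ℳ (p.1 : M) p.2 : M)
  have hg : ∀ p : T × D, g p ∈ ℳ p.2 := fun p => (decompose ℳ (p.1 : M) p.2).2
  have hH : span (MvPolynomial σ K) {z : M | SetLike.IsHomogeneousElem ℳ z} = ⊤ :=
    eq_top_iff.mpr (hgen ▸ span_mono (Set.range_subset_iff.mpr fun p => ⟨_, hg p⟩))
  obtain ⟨m, hmH, hind, htors⟩ := exists_linearIndependent_fin_rk_of_span_eq_top hH
  choose a ha using hmH
  have hv : ∀ p, ∃ v : σ →₀ ℕ,
      monomial v (1 : K) • g p ∈ span (MvPolynomial σ K) (Set.range m) := by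
    intro p
    obtain ⟨s, hs0, hsF⟩ := htors (g p)
    obtain ⟨v, hv⟩ := support_nonempty.mpr hs0
    have hF z (hz : z ∈ span (MvPolynomial σ K) (Set.range m)) u :=
      coe_decompose_mem_span_of_mem_span hℳ ha hz u
    exact ⟨v, monomial_one_smul_mem_of_smul_mem hℳ hF (hg p) hsF (mem_support_iff.mp hv)⟩
  choose v hv using hv
  obtain ⟨N₁, hN₁⟩ := Finite.exists_le fun p => v p + p.2
  obtain ⟨N₂, hN₂⟩ := Finite.exists_le a
  refine ⟨N₁ ⊔ N₂, fun N hN => ?_⟩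
  have hMF z (hz : z ∈ ℳ N) : z ∈ span (MvPolynomial σ K) (Set.range m) :=
    mem_of_monomial_smul_mem hℳ hg hgen hv (fun p => (hN₁ p).trans (le_sup_left.trans hN)) hz
  rw [finrank_eq_card_of_le_span hℳ ha hind (fun i => (hN₂ i).trans (le_sup_right.trans hN)) hMF,
    Fintype.card_fin]

theorem statement4 (K : Type) [Field K] (r : ℕ)
    (M : Type) [AddCommGroup M] [Module (MvPolynomial (Fin r) K) M]
    [Module K M] [IsScalarTower K (MvPolynomial (Fin r) K) M]
    [Module.Finite (MvPolynomial (Fin r) K) M]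
    (ℳ : (Fin r →₀ ℕ) → Submodule K M)
    (hM : DirectSum.IsInternal ℳ)
    (hMgr : ∀ (u v : Fin r →₀ ℕ) (c : K) (m : M), m ∈ ℳ v →
      (MvPolynomial.monomial u c) • m ∈ ℳ (u + v))
    -- `HS` is the multigraded Hilbert series of `M`
    (HS : MvPowerSeries (Fin r) ℤ)
    (hHS : ∀ u : Fin r →₀ ℕ, MvPowerSeries.coeff u HS = (Module.finrank K (ℳ u) : ℤ))
    (P : MvPolynomial (Fin r) ℤ)
    (hP : (∏ i : Fin r, (1 - MvPowerSeries.X i)) * HS = ↑P) :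
    (rk (MvPolynomial (Fin r) K) M : ℤ) = MvPolynomial.eval (fun _ => (1 : ℤ)) P := by
  let _ := hM.chooseDecomposition
  obtain ⟨N₀, hN₀⟩ := exists_finrank_eq_rk hMgr
  obtain ⟨N₁, hN₁⟩ := P.support.exists_le
  rw [← hN₀ (N₀ ⊔ N₁) le_sup_left, ← hHS,
    MvPowerSeries.coeff_eq_eval_one_of_prod_one_sub_X_mul_eq hP fun u hu =>
      (hN₁ u hu).trans le_sup_right]
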